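/- arXiv:2008.02730 — 2 statements merged into one kernel-verified Lean document; each statement's English description precedes it below -/
import Mathlib

section
/- For the 5-qubit state ρ = x(|ψ⟩⟨ψ| + |φ⟩⟨φ|) + ((1−2x)/32) I_{32}, where |ψ⟩ = (|00000⟩+|11111⟩)/√2 and |φ⟩ = (|00001⟩+|00010⟩+|00100⟩+|01000⟩)/2, the squared norm of the full correlation tensor (with Pauli matrices σ_1, σ_2, σ_3 as SU(2) generators) is ‖T^{(12345)}‖² = ∑_{i_1,…,i_5=1}^{3} (Tr(ρ σ_{i_1}⊗⋯⊗σ_{i_5}))² = 20x². -/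
open Matrix BigOperators

/-- The Kronecker (tensor) product of a finite family of square matrices, given entrywise. -/
def famKron {ι : Type*} [Fintype ι] {dims : ι → ℕ}
    (M : ∀ k, Matrix (Fin (dims k)) (Fin (dims k)) ℂ) :
    Matrix (∀ k, Fin (dims k)) (∀ k, Fin (dims k)) ℂ :=
  fun a b => ∏ k, M k (a k) (b k)

/-- The three Pauli matrices σ₁, σ₂, σ₃. -/
def pauli : Fin 3 → Matrix (Fin 2) (Fin 2) ℂ :=
  ![!![0, 1; 1, 0], !![0, -Complex.I; Complex.I, 0], !![1, 0; 0, -1]]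

/-- The standard basis state |w⟩ of five qubits, as a vector. -/
def basisVec (w : Fin 5 → Fin 2) : (Fin 5 → Fin 2) → ℂ := fun v => if v = w then 1 else 0


/-
The identity part of `ρ` is invisible to the traceless Pauli strings, so
`Tr(ρ σ_i) = x (⟨ψ|σ_i|ψ⟩ + ⟨φ|σ_i|φ⟩)`, a combination of entries of `σ_i` between the basis
states supporting `ψ` and `φ`, with coefficients `1/2` and `1/4`. These entries are Gaussian
integers, so `4 Tr(ρ σ_i) / x ∈ ℤ[i]`, and the claim becomes the finite identity that the squared
norms of these numbers sum to `320`. Behind that number: `ψ` contributes `1` for each of the 16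
strings of `σ₁, σ₂` with an even number of `σ₂`, `φ` contributes `4` from strings starting with
`σ₃`, and the two sets of strings are disjoint.
-/

theorem trace_famKron {ι : Type*} [Fintype ι] [DecidableEq ι] {dims : ι → ℕ}
    (M : ∀ k, Matrix (Fin (dims k)) (Fin (dims k)) ℂ) :
    (famKron M).trace = ∏ k, (M k).trace := by
  simp only [Matrix.trace, Matrix.diag, famKron, Finset.prod_univ_sum, Fintype.piFinset_univ]

theorem trace_pauli (j : Fin 3) : (pauli j).trace = 0 := by
  fin_cases j <;> simp [pauli, Matrix.trace, Fin.sum_univ_two]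

theorem trace_smul_add_smul_one_mul {n : Type*} [Fintype n] [DecidableEq n] (x c : ℂ)
    (A P : Matrix n n ℂ) (hP : P.trace = 0) :
    ((x • A + c • 1) * P).trace = x * (A * P).trace := by
  rw [add_mul, trace_add, smul_mul_assoc, smul_mul_assoc, one_mul, trace_smul, trace_smul, hP,
    smul_zero, add_zero, smul_eq_mul]

theorem trace_vecMulVec_smul_sum_single_mul {n m : Type*} [Fintype n] [DecidableEq n] [Fintype m]
    (c : ℝ) (w : m → n) (P : Matrix n n ℂ) :
    (vecMulVec ((c : ℂ) • ∑ i, Pi.single (w i) 1)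
        (star ((c : ℂ) • ∑ i, Pi.single (w i) 1)) * P).trace
      = ((c ^ 2 : ℝ) : ℂ) * ∑ i, ∑ j, P (w i) (w j) := by
  have hstar : star ((c : ℂ) • ∑ i, Pi.single (w i) 1) = (c : ℂ) • ∑ i, Pi.single (w i) 1 := by
    simp only [star_smul, star_sum, Pi.star_single, star_one, Complex.star_def,
      Complex.conj_ofReal]
  rw [vecMulVec_mul, trace_vecMulVec, dotProduct_comm, ← dotProduct_mulVec, hstar]
  simp only [smul_dotProduct, sum_dotProduct, single_one_dotProduct, mulVec_smul, mulVec_sum,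
    mulVec_single_one, Finset.sum_apply, Pi.smul_apply, col_apply, smul_eq_mul, Finset.mul_sum,
    Complex.ofReal_pow]
  ring_nf

section PauliString

variable {ι : Type*} [Fintype ι]

def pauliString (i : ι → Fin 3) : Matrix (ι → Fin 2) (ι → Fin 2) ℂ :=
  famKron (dims := fun _ => 2) fun k => pauli (i k)

theorem trace_pauliString [DecidableEq ι] [Nonempty ι] (i : ι → Fin 3) :
    (pauliString i).trace = 0 := by
  rw [pauliString, trace_famKron]
  exact Finset.prod_eq_zero (Finset.mem_univ (Classical.arbitrary ι)) (trace_pauli _)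

-- The Pauli matrices over `ℤ[i]`, where the kernel can evaluate all `3 ^ 5` correlations exactly.
def pauliGaussInt : Fin 3 → Matrix (Fin 2) (Fin 2) GaussianInt :=
  ![!![0, 1; 1, 0], !![0, -⟨0, 1⟩; ⟨0, 1⟩, 0], !![1, 0; 0, -1]]

def pauliStringGaussInt (i : ι → Fin 3) (a b : ι → Fin 2) : GaussianInt :=
  ∏ k, pauliGaussInt (i k) (a k) (b k)

theorem pauli_apply_eq_toComplex (j : Fin 3) (a b : Fin 2) :
    pauli j a b = pauliGaussInt j a b := by
  fin_cases j <;> fin_cases a <;> fin_cases b <;>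
    simp [pauli, pauliGaussInt, GaussianInt.toComplex_def]

theorem pauliString_apply (i : ι → Fin 3) (a b : ι → Fin 2) :
    pauliString i a b = pauliStringGaussInt i a b := by
  simp only [pauliString, famKron, pauliStringGaussInt, pauli_apply_eq_toComplex, map_prod]

end PauliString

theorem basisVec_eq_single (w : Fin 5 → Fin 2) : basisVec w = Pi.single w 1 := by
  ext v
  simp [basisVec, Pi.single_apply]

def ghzSupport : Fin 2 → Fin 5 → Fin 2 := ![0, 1]

def wSupport (a : Fin 4) : Fin 5 → Fin 2 := fun j => if j = ![4, 3, 2, 1] a then 1 else 0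

noncomputable def ghzState : (Fin 5 → Fin 2) → ℂ :=
  (((Real.sqrt 2)⁻¹ : ℝ) : ℂ) • ∑ a, Pi.single (ghzSupport a) 1

noncomputable def wState : (Fin 5 → Fin 2) → ℂ :=
  ((1 / 2 : ℝ) : ℂ) • ∑ a, Pi.single (wSupport a) 1

theorem basisVec_sum_eq_ghzState :
    (fun v => ((Real.sqrt 2 : ℝ) : ℂ)⁻¹ * (basisVec (fun _ => 0) v + basisVec (fun _ => 1) v))
      = ghzState := by
  ext v
  simp only [ghzState, basisVec_eq_single, Complex.ofReal_inv, Fin.sum_univ_two, Pi.smul_apply,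
    Pi.add_apply, smul_eq_mul]
  -- `simp` cannot rewrite the dependent index of `Pi.single`; the indices agree definitionally.
  rfl

theorem basisVec_sum_eq_wState :
    (fun v => (1 / 2 : ℂ) *
        (basisVec (fun j => if j = 4 then 1 else 0) v
          + basisVec (fun j => if j = 3 then 1 else 0) v
          + basisVec (fun j => if j = 2 then 1 else 0) v
          + basisVec (fun j => if j = 1 then 1 else 0) v))
      = wState := by
  ext v
  simp only [wState, basisVec_eq_single, one_div, Complex.ofReal_inv, Complex.ofReal_ofNat,
    Fin.sum_univ_four, Pi.smul_apply, Pi.add_apply, smul_eq_mul]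
  rfl

def scaledCorrelation (i : Fin 5 → Fin 3) : GaussianInt :=
  2 * ∑ a, ∑ b, pauliStringGaussInt i (ghzSupport a) (ghzSupport b)
    + ∑ a, ∑ b, pauliStringGaussInt i (wSupport a) (wSupport b)

theorem trace_mixture_mul_pauliString (x c : ℝ) (i : Fin 5 → Fin 3) :
    (((x : ℂ) • (vecMulVec ghzState (star ghzState) + vecMulVec wState (star wState))
        + (c : ℂ) • 1) * pauliString i).trace = ((x / 4 : ℝ) : ℂ) * scaledCorrelation i := by
  rw [trace_smul_add_smul_one_mul _ _ _ _ (trace_pauliString i), add_mul, trace_add, ghzState,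
    wState, trace_vecMulVec_smul_sum_single_mul, trace_vecMulVec_smul_sum_single_mul, inv_pow,
    Real.sq_sqrt zero_le_two]
  simp only [pauliString_apply, scaledCorrelation, map_add, map_mul, map_sum, map_ofNat]
  push_cast
  ring

theorem norm_sq_ofReal_mul_toComplex (r : ℝ) (z : GaussianInt) :
    ‖(r : ℂ) * z‖ ^ 2 = r ^ 2 * z.norm := by
  rw [Complex.sq_norm, Complex.normSq_mul, Complex.normSq_ofReal, GaussianInt.intCast_real_norm, sq]

theorem sum_norm_scaledCorrelation : ∑ i, (scaledCorrelation i).norm = 320 := by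
  decide +kernel

theorem example1_correlation_norm_general (x : ℝ)
    (ψ φ : (Fin 5 → Fin 2) → ℂ)
    (hψ : ψ = fun v => ((Real.sqrt 2 : ℝ) : ℂ)⁻¹ *
        (basisVec (fun _ => 0) v + basisVec (fun _ => 1) v))
    (hφ : φ = fun v => (1 / 2 : ℂ) *
        (basisVec (fun j => if j = 4 then 1 else 0) v
          + basisVec (fun j => if j = 3 then 1 else 0) v
          + basisVec (fun j => if j = 2 then 1 else 0) v
          + basisVec (fun j => if j = 1 then 1 else 0) v))
    (ρ : Matrix (Fin 5 → Fin 2) (Fin 5 → Fin 2) ℂ)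
    (hρ : ρ = (x : ℂ) • (vecMulVec ψ (star ψ) + vecMulVec φ (star φ))
        + (((1 - 2 * x) / 32 : ℝ) : ℂ) • (1 : Matrix (Fin 5 → Fin 2) (Fin 5 → Fin 2) ℂ)) :
    ∑ i : Fin 5 → Fin 3,
        ‖(ρ * famKron (dims := fun _ : Fin 5 => 2) fun k => pauli (i k)).trace‖ ^ 2
      = 20 * x ^ 2 := by
  rw [hψ.trans basisVec_sum_eq_ghzState, hφ.trans basisVec_sum_eq_wState] at hρ
  subst hρ
  calc _ = ∑ i, (x / 4) ^ 2 * ((scaledCorrelation i).norm : ℝ) := by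
        refine Finset.sum_congr rfl fun i _ => ?_
        rw [← norm_sq_ofReal_mul_toComplex, ← trace_mixture_mul_pauliString]
        rfl
    _ = 20 * x ^ 2 := by
        rw [← Finset.mul_sum, ← Int.cast_sum, sum_norm_scaledCorrelation]
        push_cast
        ring

/-- For the 5-qubit state ρ = x(|ψ⟩⟨ψ| + |φ⟩⟨φ|) + ((1−2x)/32)I with
|ψ⟩ = (|00000⟩+|11111⟩)/√2 and |φ⟩ = (|00001⟩+|00010⟩+|00100⟩+|01000⟩)/2, the squared
norm of the full correlation tensor equals 20x². -/
theorem example1_correlation_norm (x : ℝ) (hx0 : 0 ≤ x) (hx : x ≤ 1 / 2)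
    (ψ φ : (Fin 5 → Fin 2) → ℂ)
    (hψ : ψ = fun v => ((Real.sqrt 2 : ℝ) : ℂ)⁻¹ *
        (basisVec (fun _ => 0) v + basisVec (fun _ => 1) v))
    (hφ : φ = fun v => (1 / 2 : ℂ) *
        (basisVec (fun j => if j = 4 then 1 else 0) v
          + basisVec (fun j => if j = 3 then 1 else 0) v
          + basisVec (fun j => if j = 2 then 1 else 0) v
          + basisVec (fun j => if j = 1 then 1 else 0) v))
    (ρ : Matrix (Fin 5 → Fin 2) (Fin 5 → Fin 2) ℂ)
    (hρ : ρ = (x : ℂ) • (vecMulVec ψ (star ψ) + vecMulVec φ (star φ))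
        + (((1 - 2 * x) / 32 : ℝ) : ℂ) • (1 : Matrix (Fin 5 → Fin 2) (Fin 5 → Fin 2) ℂ)) :
    ∑ i : Fin 5 → Fin 3,
        ‖(ρ * famKron (dims := fun _ : Fin 5 => 2) fun k => pauli (i k)).trace‖ ^ 2
      = 20 * x ^ 2 :=
  example1_correlation_norm_general x ψ φ hψ hφ ρ hρ
end

section
/- For the state ρ = x|ψ⟩⟨ψ| + ((1−x)/120) I_{120} on ℂ²⊗ℂ³⊗ℂ⁴⊗ℂ⁵, where |ψ⟩ = (|0⟩|0⟩|0⟩|4⟩ + |1⟩|0⟩|0⟩|0⟩)/√2, the squared norm of the full correlation tensor is ‖T^{(1234)}‖² = ∑_{i_1=1}^{3}∑_{i_2=1}^{8}∑_{i_3=1}^{15}∑_{i_4=1}^{24} (Tr(ρ λ_{i_1}⊗λ_{i_2}⊗λ_{i_3}⊗λ_{i_4}))² = 6x². -/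
/-!
Since every `λ_{i₁} ⊗ λ_{i₂} ⊗ λ_{i₃} ⊗ λ_{i₄}` is traceless, the white noise in `ρ` is invisible
to the correlations: `Tr(ρ Λ) = x ⟨ψ|Λ|ψ⟩`, a real number because `Λ` is Hermitian. Summing the
squares over all generators factorises over the four parties, and each factor is given by the
completeness relation `∑ᵢ (λᵢ)_{ab} (λᵢ)_{pq} = 2 δ_{aq} δ_{bp} - (2/d) δ_{ab} δ_{pq}`, which holds
because `1` together with the `λᵢ` is a trace-orthogonal basis of the `d × d` matrices. As `ψ` is
supported on two basis vectors, only `16` such products occur; they add up to `24`, and the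
normalisation `1/√2` of `ψ` turns this into `6`.
-/

open Matrix BigOperators

/-- The four-fold Kronecker (tensor) product of square matrices, given entrywise. -/
def kron4 {d1 d2 d3 d4 : ℕ} (M1 : Matrix (Fin d1) (Fin d1) ℂ) (M2 : Matrix (Fin d2) (Fin d2) ℂ)
    (M3 : Matrix (Fin d3) (Fin d3) ℂ) (M4 : Matrix (Fin d4) (Fin d4) ℂ) :
    Matrix (Fin d1 × Fin d2 × Fin d3 × Fin d4) (Fin d1 × Fin d2 × Fin d3 × Fin d4) ℂ :=
  fun a b => M1 a.1 b.1 * M2 a.2.1 b.2.1 * M3 a.2.2.1 b.2.2.1 * M4 a.2.2.2 b.2.2.2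

namespace Matrix

variable {K n ι : Type*} [Field K] [Fintype n] [DecidableEq n] [Fintype ι] [DecidableEq ι]
  {F : ι → Matrix n n K} {c : ι → K}

theorem linearIndependent_of_trace_mul_eq_ite (hc : ∀ i, c i ≠ 0)
    (hF : ∀ i j, (F i * F j).trace = if i = j then c i else 0) : LinearIndependent K F := by
  refine Fintype.linearIndependent_iff.mpr fun g hg i => ?_
  have h := congrArg (fun M => (F i * M).trace) hg
  simp only [Matrix.mul_sum, Matrix.mul_smul, trace_sum, trace_smul, hF, smul_eq_mul, mul_ite,
    mul_zero, Finset.sum_ite_eq, Finset.mem_univ, if_true, trace_zero] at h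
  exact (mul_eq_zero.mp h).resolve_right (hc i)

theorem sum_trace_mul_div_smul_eq (hc : ∀ i, c i ≠ 0)
    (hF : ∀ i j, (F i * F j).trace = if i = j then c i else 0)
    (hcard : Fintype.card ι = Fintype.card n ^ 2) (M : Matrix n n K) :
    ∑ i, ((F i * M).trace / c i) • F i = M := by
  have hspan := (linearIndependent_of_trace_mul_eq_ite hc hF).span_eq_top_of_card_eq_finrank'
    (by rw [Module.finrank_matrix, Module.finrank_self, hcard, sq, mul_one])
  have hM : M ∈ Submodule.span K (Set.range F) := hspan ▸ Submodule.mem_top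
  obtain ⟨g, rfl⟩ := (Submodule.mem_span_range_iff_exists_fun K).mp hM
  refine Finset.sum_congr rfl fun i _ => ?_
  simp only [Matrix.mul_sum, Matrix.mul_smul, trace_sum, trace_smul, hF, smul_eq_mul, mul_ite,
    mul_zero, Finset.sum_ite_eq, Finset.mem_univ, if_true, mul_div_cancel_right₀ _ (hc i)]

theorem sum_apply_mul_apply_of_traceless_orthogonal [CharZero K] {lam : ι → Matrix n n K} {c : K}
    (hc : c ≠ 0) (hcard : Fintype.card ι + 1 = Fintype.card n ^ 2)
    (htr : ∀ i, (lam i).trace = 0)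
    (horth : ∀ i j, (lam i * lam j).trace = if i = j then c else 0)
    (a b p q : n) :
    ∑ i, lam i a b * lam i p q
      = c * (if q = a ∧ p = b then 1 else 0)
        - c / Fintype.card n * (if a = b ∧ p = q then 1 else 0) := by
  -- Adjoining the identity to the family gives a trace-orthogonal basis of all matrices.
  let F : Option ι → Matrix n n K := fun i => i.elim 1 lam
  let w : Option ι → K := fun i => i.elim (Fintype.card n) fun _ => c
  have hd : (Fintype.card n : K) ≠ 0 :=
    Nat.cast_ne_zero.mpr (Fintype.card_pos_iff.mpr ⟨a⟩).ne'
  have hw : ∀ i, w i ≠ 0 := by rintro (_ | _) <;> simp [w, hd, hc]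
  have hF : ∀ i j, (F i * F j).trace = if i = j then w i else 0 := by
    rintro (_ | i) (_ | j) <;> simp [F, w, htr, horth, eq_comm]
  have h := congrFun (congrFun (sum_trace_mul_div_smul_eq hw hF
    (by rw [Fintype.card_option, hcard]) (single q p 1)) a) b
  simp [trace_mul_single, Fintype.sum_option, F, w, single_apply, one_apply, sum_apply] at h
  have hsum : ∑ i, lam i p q / c * lam i a b = (∑ i, lam i a b * lam i p q) / c := by
    rw [Finset.sum_div]
    exact Finset.sum_congr rfl fun i _ => by ring
  rw [hsum, ← eq_sub_iff_add_eq', div_eq_iff hc] at h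
  rw [h]
  split_ifs <;> simp_all <;> ring

end Matrix

open scoped Kronecker

theorem Matrix.IsHermitian.kronecker {R m n : Type*} [CommRing R] [StarRing R]
    {A : Matrix m m R} {B : Matrix n n R} (hA : A.IsHermitian) (hB : B.IsHermitian) :
    (A ⊗ₖ B).IsHermitian := by
  rw [IsHermitian, conjTranspose_kronecker, hA.eq, hB.eq]

section kron4

variable {d1 d2 d3 d4 : ℕ} (M1 : Matrix (Fin d1) (Fin d1) ℂ) (M2 : Matrix (Fin d2) (Fin d2) ℂ)
  (M3 : Matrix (Fin d3) (Fin d3) ℂ) (M4 : Matrix (Fin d4) (Fin d4) ℂ)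

theorem kron4_eq_kronecker : kron4 M1 M2 M3 M4 = M1 ⊗ₖ (M2 ⊗ₖ (M3 ⊗ₖ M4)) := by
  ext
  simp [kron4, mul_assoc]

theorem trace_kron4 : (kron4 M1 M2 M3 M4).trace = M1.trace * M2.trace * M3.trace * M4.trace := by
  simp [kron4_eq_kronecker, trace_kronecker, mul_assoc]

variable {M1 M2 M3 M4} in
theorem isHermitian_kron4 (h1 : M1.IsHermitian) (h2 : M2.IsHermitian) (h3 : M3.IsHermitian)
    (h4 : M4.IsHermitian) : (kron4 M1 M2 M3 M4).IsHermitian := by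
  rw [kron4_eq_kronecker]
  exact h1.kronecker (h2.kronecker (h3.kronecker h4))

theorem sum_kron4_apply_mul_kron4_apply {ι1 ι2 ι3 ι4 : Type*} [Fintype ι1] [Fintype ι2]
    [Fintype ι3] [Fintype ι4] (lam1 : ι1 → Matrix (Fin d1) (Fin d1) ℂ)
    (lam2 : ι2 → Matrix (Fin d2) (Fin d2) ℂ) (lam3 : ι3 → Matrix (Fin d3) (Fin d3) ℂ)
    (lam4 : ι4 → Matrix (Fin d4) (Fin d4) ℂ) (a b p q : Fin d1 × Fin d2 × Fin d3 × Fin d4) :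
    ∑ i : ι1 × ι2 × ι3 × ι4, kron4 (lam1 i.1) (lam2 i.2.1) (lam3 i.2.2.1) (lam4 i.2.2.2) a b
        * kron4 (lam1 i.1) (lam2 i.2.1) (lam3 i.2.2.1) (lam4 i.2.2.2) p q
      = (∑ i, lam1 i a.1 b.1 * lam1 i p.1 q.1) * (∑ i, lam2 i a.2.1 b.2.1 * lam2 i p.2.1 q.2.1)
        * (∑ i, lam3 i a.2.2.1 b.2.2.1 * lam3 i p.2.2.1 q.2.2.1)
        * (∑ i, lam4 i a.2.2.2 b.2.2.2 * lam4 i p.2.2.2 q.2.2.2) := by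
  calc _ = ∑ i : ι1 × ι2 × ι3 × ι4, (lam1 i.1 a.1 b.1 * lam1 i.1 p.1 q.1)
        * (lam2 i.2.1 a.2.1 b.2.1 * lam2 i.2.1 p.2.1 q.2.1)
        * (lam3 i.2.2.1 a.2.2.1 b.2.2.1 * lam3 i.2.2.1 p.2.2.1 q.2.2.1)
        * (lam4 i.2.2.2 a.2.2.2 b.2.2.2 * lam4 i.2.2.2 p.2.2.2 q.2.2.2) :=
        Finset.sum_congr rfl fun _ _ => by simp only [kron4]; ring
    _ = _ := by simp only [Fintype.sum_prod_type, ← Finset.sum_mul, ← Finset.mul_sum]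

end kron4

theorem Matrix.trace_smul_vecMulVec_add_smul_one_mul {R n : Type*} [CommSemiring R] [Fintype n]
    [DecidableEq n] (x c : R) (ψ φ : n → R) {A : Matrix n n R} (hA : A.trace = 0) :
    ((x • vecMulVec ψ φ + c • 1) * A).trace = x * (φ ⬝ᵥ A *ᵥ ψ) := by
  rw [Matrix.add_mul, trace_add, smul_mul, smul_mul, Matrix.one_mul, trace_smul, trace_smul, hA,
    vecMulVec_mul, trace_vecMulVec, dotProduct_comm, dotProduct_mulVec, smul_zero, add_zero,
    smul_eq_mul]

theorem Complex.ofReal_norm_sq_of_im_eq_zero {z : ℂ} (hz : z.im = 0) :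
    ((‖z‖ ^ 2 : ℝ) : ℂ) = z ^ 2 := by
  rw [Complex.ofReal_pow, ← Complex.mul_conj', Complex.conj_eq_iff_im.mpr hz, sq]

theorem star_dotProduct_mulVec_of_eq_smul_add_single {n : Type*} [Fintype n] [DecidableEq n]
    (s : ℂ) (u v : n) (ψ : n → ℂ)
    (hψ : ψ = fun p => s * ((if p = u then 1 else 0) + (if p = v then 1 else 0)))
    (A : Matrix n n ℂ) :
    star ψ ⬝ᵥ A *ᵥ ψ = star s * s * (A u u + A u v + A v u + A v v) := by
  subst hψ
  simp [dotProduct, mulVec, mul_add, add_mul, Finset.sum_add_distrib, mul_ite, ite_mul,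
    apply_ite (starRingEnd ℂ)]
  ring

theorem sum_sq_star_dotProduct_kron4_mulVec
    (lam1 : Fin 3 → Matrix (Fin 2) (Fin 2) ℂ) (lam2 : Fin 8 → Matrix (Fin 3) (Fin 3) ℂ)
    (lam3 : Fin 15 → Matrix (Fin 4) (Fin 4) ℂ) (lam4 : Fin 24 → Matrix (Fin 5) (Fin 5) ℂ)
    (htr1 : ∀ i, (lam1 i).trace = 0) (htr2 : ∀ i, (lam2 i).trace = 0)
    (htr3 : ∀ i, (lam3 i).trace = 0) (htr4 : ∀ i, (lam4 i).trace = 0)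
    (horth1 : ∀ i j, (lam1 i * lam1 j).trace = if i = j then 2 else 0)
    (horth2 : ∀ i j, (lam2 i * lam2 j).trace = if i = j then 2 else 0)
    (horth3 : ∀ i j, (lam3 i * lam3 j).trace = if i = j then 2 else 0)
    (horth4 : ∀ i j, (lam4 i * lam4 j).trace = if i = j then 2 else 0)
    (ψ : Fin 2 × Fin 3 × Fin 4 × Fin 5 → ℂ)
    (hψ : ψ = fun p => ((Real.sqrt 2 : ℝ) : ℂ)⁻¹ *
        ((if p = ((0 : Fin 2), (0 : Fin 3), (0 : Fin 4), (4 : Fin 5)) then 1 else 0)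
          + (if p = ((1 : Fin 2), (0 : Fin 3), (0 : Fin 4), (0 : Fin 5)) then 1 else 0))) :
    ∑ i : Fin 3 × Fin 8 × Fin 15 × Fin 24,
      (star ψ ⬝ᵥ kron4 (lam1 i.1) (lam2 i.2.1) (lam3 i.2.2.1) (lam4 i.2.2.2) *ᵥ ψ) ^ 2 = 6 := by
  let w : Fin 2 → Fin 2 × Fin 3 × Fin 4 × Fin 5 := ![(0, 0, 0, 4), (1, 0, 0, 0)]
  have hhalf : star (((Real.sqrt 2 : ℝ) : ℂ)⁻¹) * ((Real.sqrt 2 : ℝ) : ℂ)⁻¹ = 2⁻¹ := by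
    rw [Complex.star_def, map_inv₀, Complex.conj_ofReal, ← mul_inv, ← Complex.ofReal_mul,
      Real.mul_self_sqrt zero_le_two, Complex.ofReal_ofNat]
  have hψK : ∀ A, star ψ ⬝ᵥ A *ᵥ ψ = 2⁻¹ * ∑ a, ∑ b, A (w a) (w b) := by
    intro A
    rw [star_dotProduct_mulVec_of_eq_smul_add_single _ _ _ ψ hψ, hhalf]
    simp [w, Fin.sum_univ_two]
    ring
  have c1 := sum_apply_mul_apply_of_traceless_orthogonal two_ne_zero (by simp) htr1 horth1
  have c2 := sum_apply_mul_apply_of_traceless_orthogonal two_ne_zero (by simp) htr2 horth2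
  have c3 := sum_apply_mul_apply_of_traceless_orthogonal two_ne_zero (by simp) htr3 horth3
  have c4 := sum_apply_mul_apply_of_traceless_orthogonal two_ne_zero (by simp) htr4 horth4
  simp only [hψK, mul_pow, ← Finset.mul_sum]
  simp only [sq, Fin.sum_univ_two, add_mul, mul_add, Finset.sum_add_distrib,
    sum_kron4_apply_mul_kron4_apply, c1, c2, c3, c4]
  norm_num [w, Fin.ext_iff]

theorem example2_correlation_norm_general (x : ℝ)
    (ψ : Fin 2 × Fin 3 × Fin 4 × Fin 5 → ℂ)
    (hψ : ψ = fun p => ((Real.sqrt 2 : ℝ) : ℂ)⁻¹ *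
        ((if p = ((0 : Fin 2), (0 : Fin 3), (0 : Fin 4), (4 : Fin 5)) then 1 else 0)
          + (if p = ((1 : Fin 2), (0 : Fin 3), (0 : Fin 4), (0 : Fin 5)) then 1 else 0)))
    (ρ : Matrix (Fin 2 × Fin 3 × Fin 4 × Fin 5) (Fin 2 × Fin 3 × Fin 4 × Fin 5) ℂ)
    (hρ : ρ = (x : ℂ) • vecMulVec ψ (star ψ)
        + (((1 - x) / 120 : ℝ) : ℂ) • (1 : Matrix (Fin 2 × Fin 3 × Fin 4 × Fin 5)
            (Fin 2 × Fin 3 × Fin 4 × Fin 5) ℂ))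
    (lam1 : Fin 3 → Matrix (Fin 2) (Fin 2) ℂ)
    (lam2 : Fin 8 → Matrix (Fin 3) (Fin 3) ℂ)
    (lam3 : Fin 15 → Matrix (Fin 4) (Fin 4) ℂ)
    (lam4 : Fin 24 → Matrix (Fin 5) (Fin 5) ℂ)
    (hherm1 : ∀ i, (lam1 i).IsHermitian) (hherm2 : ∀ i, (lam2 i).IsHermitian)
    (hherm3 : ∀ i, (lam3 i).IsHermitian) (hherm4 : ∀ i, (lam4 i).IsHermitian)
    (htr01 : ∀ i, (lam1 i).trace = 0) (htr02 : ∀ i, (lam2 i).trace = 0)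
    (htr03 : ∀ i, (lam3 i).trace = 0) (htr04 : ∀ i, (lam4 i).trace = 0)
    (horth1 : ∀ i j, (lam1 i * lam1 j).trace = if i = j then 2 else 0)
    (horth2 : ∀ i j, (lam2 i * lam2 j).trace = if i = j then 2 else 0)
    (horth3 : ∀ i j, (lam3 i * lam3 j).trace = if i = j then 2 else 0)
    (horth4 : ∀ i j, (lam4 i * lam4 j).trace = if i = j then 2 else 0) :
    ∑ i : Fin 3 × Fin 8 × Fin 15 × Fin 24,
        ‖(ρ * kron4 (lam1 i.1) (lam2 i.2.1) (lam3 i.2.2.1) (lam4 i.2.2.2)).trace‖ ^ 2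
      = 6 * x ^ 2 := by
  have hnorm : ∀ i : Fin 3 × Fin 8 × Fin 15 × Fin 24,
      ((‖(ρ * kron4 (lam1 i.1) (lam2 i.2.1) (lam3 i.2.2.1) (lam4 i.2.2.2)).trace‖ ^ 2 : ℝ) : ℂ)
        = x ^ 2
          * (star ψ ⬝ᵥ kron4 (lam1 i.1) (lam2 i.2.1) (lam3 i.2.2.1) (lam4 i.2.2.2) *ᵥ ψ) ^ 2 := by
    intro i
    have hherm := isHermitian_kron4 (hherm1 i.1) (hherm2 i.2.1) (hherm3 i.2.2.1) (hherm4 i.2.2.2)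
    rw [hρ, trace_smul_vecMulVec_add_smul_one_mul _ _ _ _ (by rw [trace_kron4, htr04, mul_zero]),
      Complex.ofReal_norm_sq_of_im_eq_zero
        (by rw [Complex.im_ofReal_mul]
            exact mul_eq_zero_of_right _ (hherm.im_star_dotProduct_mulVec_self ψ)), mul_pow]
  apply Complex.ofReal_injective
  rw [Complex.ofReal_sum]
  simp only [hnorm, ← Finset.mul_sum, sum_sq_star_dotProduct_kron4_mulVec lam1 lam2 lam3 lam4
    htr01 htr02 htr03 htr04 horth1 horth2 horth3 horth4 ψ hψ]
  push_cast
  ring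

/-- For the state ρ = x|ψ⟩⟨ψ| + ((1−x)/120)I on ℂ²⊗ℂ³⊗ℂ⁴⊗ℂ⁵ with
|ψ⟩ = (|0004⟩ + |1000⟩)/√2, and any complete orthogonal families of Hermitian traceless
generators (as the generalized Gell-Mann matrices are), ‖T^{(1234)}‖² = 6x². -/
theorem example2_correlation_norm (x : ℝ) (hx0 : 0 ≤ x) (hx : x ≤ 1)
    (ψ : Fin 2 × Fin 3 × Fin 4 × Fin 5 → ℂ)
    (hψ : ψ = fun p => ((Real.sqrt 2 : ℝ) : ℂ)⁻¹ *
        ((if p = ((0 : Fin 2), (0 : Fin 3), (0 : Fin 4), (4 : Fin 5)) then 1 else 0)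
          + (if p = ((1 : Fin 2), (0 : Fin 3), (0 : Fin 4), (0 : Fin 5)) then 1 else 0)))
    (ρ : Matrix (Fin 2 × Fin 3 × Fin 4 × Fin 5) (Fin 2 × Fin 3 × Fin 4 × Fin 5) ℂ)
    (hρ : ρ = (x : ℂ) • vecMulVec ψ (star ψ)
        + (((1 - x) / 120 : ℝ) : ℂ) • (1 : Matrix (Fin 2 × Fin 3 × Fin 4 × Fin 5)
            (Fin 2 × Fin 3 × Fin 4 × Fin 5) ℂ))
    (lam1 : Fin 3 → Matrix (Fin 2) (Fin 2) ℂ)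
    (lam2 : Fin 8 → Matrix (Fin 3) (Fin 3) ℂ)
    (lam3 : Fin 15 → Matrix (Fin 4) (Fin 4) ℂ)
    (lam4 : Fin 24 → Matrix (Fin 5) (Fin 5) ℂ)
    (hherm1 : ∀ i, (lam1 i).IsHermitian) (hherm2 : ∀ i, (lam2 i).IsHermitian)
    (hherm3 : ∀ i, (lam3 i).IsHermitian) (hherm4 : ∀ i, (lam4 i).IsHermitian)
    (htr01 : ∀ i, (lam1 i).trace = 0) (htr02 : ∀ i, (lam2 i).trace = 0)
    (htr03 : ∀ i, (lam3 i).trace = 0) (htr04 : ∀ i, (lam4 i).trace = 0)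
    (horth1 : ∀ i j, (lam1 i * lam1 j).trace = if i = j then 2 else 0)
    (horth2 : ∀ i j, (lam2 i * lam2 j).trace = if i = j then 2 else 0)
    (horth3 : ∀ i j, (lam3 i * lam3 j).trace = if i = j then 2 else 0)
    (horth4 : ∀ i j, (lam4 i * lam4 j).trace = if i = j then 2 else 0) :
    ∑ i : Fin 3 × Fin 8 × Fin 15 × Fin 24,
        ‖(ρ * kron4 (lam1 i.1) (lam2 i.2.1) (lam3 i.2.2.1) (lam4 i.2.2.2)).trace‖ ^ 2
      = 6 * x ^ 2 :=
  example2_correlation_norm_general x ψ hψ ρ hρ lam1 lam2 lam3 lam4 hherm1 hherm2 hherm3 hherm4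
    htr01 htr02 htr03 htr04 horth1 horth2 horth3 horth4
end
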